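/- arXiv:2306.02622 — 2 statements merged into one kernel-verified Lean document; each statement's English description precedes it below -/
import Mathlib

section
/- Let Λ and Λ' be n×n and m×m real matrices respectively, and suppose Λ' Λ'ᵀ = I_m. Let Ω̂ be an n×m 0–1 matrix representing a partial injective matching (each row and each column has at most one entry equal to 1) satisfying Λ Ω̂ Λ'ᵀ = Ω̂. Then Ω̂ᵀ Λ Ω̂ = Î_m Λ', where Î_m = Ω̂ᵀ Ω̂ is the diagonal 0–1 matrix whose (j,j)-entry is 1 exactly when column j of Ω̂ contains a 1. -/
open scoped Matrix

/-- With `Λ' Λ'ᵀ = I` and `Ω̂` a 0–1 partial injective matching matrix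
satisfying `Λ Ω̂ Λ'ᵀ = Ω̂`, we have `Ω̂ᵀ Λ Ω̂ = (Ω̂ᵀ Ω̂) Λ'`. -/
theorem stmt4 {n m : ℕ} (Λ : Matrix (Fin n) (Fin n) ℝ) (Λ' : Matrix (Fin m) (Fin m) ℝ)
    (hΛ' : Λ' * Λ'ᵀ = 1)
    (Ω : Matrix (Fin n) (Fin m) ℝ)
    (h01 : ∀ i j, Ω i j = 0 ∨ Ω i j = 1)
    (hrow : ∀ i j j', Ω i j = 1 → Ω i j' = 1 → j = j')
    (hcol : ∀ i i' j, Ω i j = 1 → Ω i' j = 1 → i = i')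
    (hfix : Λ * Ω * Λ'ᵀ = Ω) :
    Ωᵀ * Λ * Ω = (Ωᵀ * Ω) * Λ' := by
  have h2 : Λ'ᵀ * Λ' = 1 := mul_eq_one_comm.mp hΛ'
  have h3 : Λ * Ω = Ω * Λ' := by
    calc Λ * Ω = Λ * Ω * (Λ'ᵀ * Λ') := by rw [h2, Matrix.mul_one]
    _ = (Λ * Ω * Λ'ᵀ) * Λ' := by simp [Matrix.mul_assoc]
    _ = Ω * Λ' := by rw [hfix]
  rw [Matrix.mul_assoc, h3, ← Matrix.mul_assoc]
end

section
/- Let Λ and Λ' be as in the matching setup with Λ' Λ'ᵀ = I_m, and let Ω̂ be a partial injective 0–1 matching matrix satisfying Λ Ω̂ Λ'ᵀ = Ω̂. Define f(i) = j if Ω̂_{i,j} = 1 and f(i) = 0 if row i of Ω̂ is zero. Then for all i, j with f(i) > 0 and f(j) > 0, we have λ'_{f(i), f(j)} = (Ω̂ᵀ Λ Ω̂)_{f(i), f(j)} = λ_{i,j}. -/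
open scoped Matrix

/-- In the matching setup, with `f` mapping a row to the column of its unique 1
(`f i = some j ↔ Ω̂ i j = 1`, and `none` for unmatched rows), for all matched `i, i'` we have
`λ'_{f(i),f(i')} = (Ω̂ᵀ Λ Ω̂)_{f(i),f(i')} = λ_{i,i'}`. -/
theorem stmt6 {n m : ℕ} (Λ : Matrix (Fin n) (Fin n) ℝ) (Λ' : Matrix (Fin m) (Fin m) ℝ)
    (hΛ' : Λ' * Λ'ᵀ = 1)
    (Ω : Matrix (Fin n) (Fin m) ℝ)
    (h01 : ∀ i j, Ω i j = 0 ∨ Ω i j = 1)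
    (hrow : ∀ i j j', Ω i j = 1 → Ω i j' = 1 → j = j')
    (hcol : ∀ i i' j, Ω i j = 1 → Ω i' j = 1 → i = i')
    (hfix : Λ * Ω * Λ'ᵀ = Ω)
    (f : Fin n → Option (Fin m))
    (hf : ∀ i j, f i = some j ↔ Ω i j = 1) :
    ∀ i i' j j', f i = some j → f i' = some j' →
      Λ' j j' = (Ωᵀ * Λ * Ω) j j' ∧ (Ωᵀ * Λ * Ω) j j' = Λ i i' := by
  intro i i' j j' hi hi'
  have hij : Ω i j = 1 := (hf i j).mp hi
  have hi'j' : Ω i' j' = 1 := (hf i' j').mp hi'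
  have colpick : ∀ (g : Fin n → ℝ), ∑ a, Ω a j * g a = g i := by
    intro g
    rw [Finset.sum_eq_single i]
    · rw [hij, one_mul]
    · intro b _ hb
      rcases h01 b j with h | h
      · rw [h, zero_mul]
      · exact absurd (hcol b i j h hij) hb
    · simp
  have colpick' : ∀ (g : Fin n → ℝ), ∑ b, g b * Ω b j' = g i' := by
    intro g
    rw [Finset.sum_eq_single i']
    · rw [hi'j', mul_one]
    · intro b _ hb
      rcases h01 b j' with h | h
      · rw [h, mul_zero]
      · exact absurd (hcol b i' j' h hi'j') hb
    · simp
  have key : (Ωᵀ * Λ * Ω) j j' = Λ i i' := by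
    rw [Matrix.mul_apply]
    have hrowpick : ∀ b, (Ωᵀ * Λ) j b = Λ i b := by
      intro b
      rw [Matrix.mul_apply]
      simpa [Matrix.transpose_apply] using colpick (fun a => Λ a b)
    simp_rw [hrowpick]
    exact colpick' (fun b => Λ i b)
  refine ⟨?_, key⟩
  have horth : Λ'ᵀ * Λ' = 1 := mul_eq_one_comm.mp hΛ'
  have hcomm : Λ * Ω = Ω * Λ' := by
    have : Λ * Ω * (Λ'ᵀ * Λ') = Λ * Ω := by rw [horth, Matrix.mul_one]
    rw [← this, ← Matrix.mul_assoc, hfix]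
  have hrw : Ωᵀ * Λ * Ω = Ωᵀ * Ω * Λ' := by
    rw [Matrix.mul_assoc, hcomm, Matrix.mul_assoc]
  rw [hrw, Matrix.mul_apply]
  have hOO : ∀ k, (Ωᵀ * Ω) j k = if k = j then 1 else 0 := by
    intro k
    rw [Matrix.mul_apply]
    simp only [Matrix.transpose_apply]
    rw [colpick (fun a => Ω a k)]
    by_cases hk : k = j
    · simp [hk, hij]
    · rcases h01 i k with h | h
      · simp [hk, h]
      · exact absurd (hrow i k j h hij) hk
  simp_rw [hOO]
  simp
end
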